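/- arXiv:1704.07453 — 4 statements merged into one kernel-verified Lean document; each statement's English description precedes it below -/
import Mathlib

section
/- In the discrete two-stage model, assume that for every state s with p s > 0 one has q s (f s) > 0 (i.e., Pr(S₂=s) > 0 implies Pr(S₂=s | M=1) > 0) and that Pr(M=1) = ∑ s, p s · q s (f s) > 0. Then for every outcome y: Pr(Y=y | Π=1) = ∑ s, (Pr(S₂=s) / Pr(S₂=s | M=1)) · Pr(Y=y, S₂=s | Π=0, M=1), where terms with p s = 0 vanish (convention 0/0 = 0). That is, the outcome distribution under the estimated optimal policy equals the inverse-probability-weighted outcome distribution over matched trajectories. -/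
/-- Lemma 1, inverse probability weighting identity.
In the discrete two-stage model, if every state `s` with `p s > 0` has
`q s (f s) > 0` and `Pr(M=1) > 0`, then for every outcome `y`,
`Pr(Y=y | Π=1) = ∑ s, (Pr(S₂=s) / Pr(S₂=s | M=1)) · Pr(Y=y, S₂=s | Π=0, M=1)`
(with the Lean convention `x / 0 = 0` handling states with `p s = 0`). -/
theorem stmt0 {S A Y : Type*} [Fintype S] [Fintype A] [Fintype Y]
    [Nonempty S] [Nonempty A] [Nonempty Y]
    (ρ : ℝ) (hρ0 : 0 < ρ) (hρ1 : ρ < 1)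
    (p : S → ℝ) (hp : ∀ s, 0 ≤ p s) (hpsum : ∑ s, p s = 1)
    (q : S → A → ℝ) (hq : ∀ s a, 0 ≤ q s a) (hqsum : ∀ s, ∑ a, q s a = 1)
    (f : S → A)
    (r : S → A → Y → ℝ) (hr : ∀ s a y, 0 ≤ r s a y)
    (hrsum : ∀ s a, ∑ y, r s a y = 1)
    (J : S → A → Bool → Y → ℝ)
    (hJ : ∀ s a₀ π y, J s a₀ π y =
      p s * q s a₀ * (if π then ρ else 1 - ρ) * r s (if π then f s else a₀) y)
    (hpos : ∀ s, 0 < p s → 0 < q s (f s))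
    (hM : 0 < ∑ s, p s * q s (f s)) :
    ∀ y : Y,
      (∑ s, ∑ a₀, J s a₀ true y) / ρ =
        ∑ s,
          (p s /
            ((∑ π : Bool, ∑ y', J s (f s) π y') /
              (∑ s', ∑ π : Bool, ∑ y', J s' (f s') π y'))) *
          (J s (f s) false y / (∑ s', ∑ y', J s' (f s') false y')) := by
  intro y
  set M := ∑ s, p s * q s (f s) with hMdef
  have h2 : ∀ s, (∑ π : Bool, ∑ y', J s (f s) π y') = p s * q s (f s) := by
    intro s
    rw [Fintype.sum_bool]
    simp only [hJ, if_true, Bool.false_eq_true, if_false]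
    rw [← Finset.mul_sum, ← Finset.mul_sum, hrsum]
    ring
  have h3 : (∑ s', ∑ π : Bool, ∑ y', J s' (f s') π y') = M := by
    simp only [h2, hMdef]
  have h4 : ∀ s, (∑ y', J s (f s) false y') = p s * q s (f s) * (1 - ρ) := by
    intro s
    simp only [hJ, Bool.false_eq_true, if_false]
    rw [← Finset.mul_sum, hrsum]
    ring
  have h5 : (∑ s', ∑ y', J s' (f s') false y') = M * (1 - ρ) := by
    simp only [h4, hMdef, Finset.sum_mul]
  have hL : (∑ s, ∑ a₀, J s a₀ true y) / ρ = ∑ s, p s * r s (f s) y := by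
    have h1 : ∀ s, (∑ a₀, J s a₀ true y) = p s * ρ * r s (f s) y := by
      intro s
      simp only [hJ, if_true]
      rw [Finset.sum_congr rfl (fun a _ => by ring : ∀ a ∈ Finset.univ,
        p s * q s a * ρ * r s (f s) y = q s a * (p s * ρ * r s (f s) y)),
        ← Finset.sum_mul, hqsum, one_mul]
    simp only [h1]
    rw [Finset.sum_congr rfl (fun s _ => by ring : ∀ s ∈ Finset.univ,
      p s * ρ * r s (f s) y = p s * r s (f s) y * ρ), ← Finset.sum_mul,
      mul_div_assoc, div_self hρ0.ne', mul_one]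
  rw [hL]
  refine Finset.sum_congr rfl fun s _ => ?_
  rw [h2, h3, h5, hJ]
  simp only [Bool.false_eq_true, if_false]
  rcases eq_or_lt_of_le (hp s) with h | h
  · rw [← h]; simp
  · have hqs := hpos s h
    have h1ρ : (0:ℝ) < 1 - ρ := by linarith
    field_simp
end

section
/- In the discrete two-stage model, assume Pr(M=1) = ∑ s, p s · q s (f s) > 0 and that there exists a constant c > 0 with q s (f s) = c for every s with p s > 0 (i.e., S₂ and M are independent). Then for every outcome y: Pr(Y=y | Π=0, M=1) = Pr(Y=y | Π=1). That is, the outcome distribution among matched trajectories collected under the exploration policy equals the outcome distribution under the estimated optimal policy. -/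
/-- Corollary 1.
If `Pr(M=1) > 0` and `S₂` and `M` are independent (i.e. `q s (f s)` is a
positive constant `c` on the support of `p`), then the outcome distribution
among matched trajectories collected under the exploration policy equals the
outcome distribution under the estimated optimal policy:
`Pr(Y=y | Π=0, M=1) = Pr(Y=y | Π=1)` for every `y`. -/
theorem stmt1 {S A Y : Type*} [Fintype S] [Fintype A] [Fintype Y]
    [Nonempty S] [Nonempty A] [Nonempty Y]
    (ρ : ℝ) (hρ0 : 0 < ρ) (hρ1 : ρ < 1)
    (p : S → ℝ) (hp : ∀ s, 0 ≤ p s) (hpsum : ∑ s, p s = 1)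
    (q : S → A → ℝ) (hq : ∀ s a, 0 ≤ q s a) (hqsum : ∀ s, ∑ a, q s a = 1)
    (f : S → A)
    (r : S → A → Y → ℝ) (hr : ∀ s a y, 0 ≤ r s a y)
    (hrsum : ∀ s a, ∑ y, r s a y = 1)
    (J : S → A → Bool → Y → ℝ)
    (hJ : ∀ s a₀ π y, J s a₀ π y =
      p s * q s a₀ * (if π then ρ else 1 - ρ) * r s (if π then f s else a₀) y)
    (hM : 0 < ∑ s, p s * q s (f s))
    (c : ℝ) (hc : 0 < c) (hconst : ∀ s, 0 < p s → q s (f s) = c) :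
    ∀ y : Y,
      (∑ s, J s (f s) false y) / (∑ s', ∑ y', J s' (f s') false y') =
        (∑ s, ∑ a₀, J s a₀ true y) / ρ := by
  intro y
  have hkey : ∀ g : S → ℝ, ∑ s, p s * q s (f s) * g s = c * ∑ s, p s * g s := by
    intro g
    rw [Finset.mul_sum]
    refine Finset.sum_congr rfl fun s _ => ?_
    rcases eq_or_lt_of_le (hp s) with h | h
    · simp [← h]
    · rw [hconst s h]; ring
  simp only [hJ, if_false, if_true, Bool.false_eq_true]
  -- LHS numerator
  have h1 : ∑ s, p s * q s (f s) * (1 - ρ) * r s (f s) y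
      = (1 - ρ) * (c * ∑ s, p s * r s (f s) y) := by
    rw [← hkey fun s => r s (f s) y, Finset.mul_sum]
    exact Finset.sum_congr rfl fun s _ => by ring
  have h2 : ∑ s, ∑ y', p s * q s (f s) * (1 - ρ) * r s (f s) y'
      = (1 - ρ) * c := by
    have : ∀ s, ∑ y', p s * q s (f s) * (1 - ρ) * r s (f s) y'
        = p s * q s (f s) * (1 - ρ) := by
      intro s
      rw [← Finset.mul_sum, hrsum]; ring
    rw [Finset.sum_congr rfl fun s _ => this s]
    have := hkey fun _ => (1 - ρ)
    rw [this]
    rw [← Finset.sum_mul, hpsum]; ring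
  have h3 : ∑ s, ∑ a₀, p s * q s a₀ * ρ * r s (f s) y
      = ρ * ∑ s, p s * r s (f s) y := by
    rw [Finset.mul_sum]
    refine Finset.sum_congr rfl fun s _ => ?_
    have : ∑ a₀, p s * q s a₀ * ρ * r s (f s) y
        = (∑ a₀, q s a₀) * (p s * ρ * r s (f s) y) := by
      rw [Finset.sum_mul]
      exact Finset.sum_congr rfl fun a _ => by ring
    rw [this, hqsum]; ring
  rw [h1, h2, h3]
  have hρ' : (1 : ℝ) - ρ ≠ 0 := by linarith
  field_simp
end

section
/- In the discrete two-stage model, assume Pr(M=1) = ∑ s, p s · q s (f s) > 0. Then for every state s and outcome y: Pr(Y=y, S₂=s | Π=0, M=1) = Pr(S₂=s | M=1) · r s (f s) y. That is, among matched trajectories collected under the exploration policy, the joint law of (Y, S₂) factors as the matched state distribution times the outcome law under the action prescribed by f. -/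
/-- If `Pr(M=1) > 0`, then among matched trajectories collected under the
exploration policy, the joint law of `(Y, S₂)` factors as the matched state
distribution times the outcome law under the action prescribed by `f`:
`Pr(Y=y, S₂=s | Π=0, M=1) = Pr(S₂=s | M=1) · r s (f s) y`. -/
theorem stmt3 {S A Y : Type*} [Fintype S] [Fintype A] [Fintype Y]
    [Nonempty S] [Nonempty A] [Nonempty Y]
    (ρ : ℝ) (hρ0 : 0 < ρ) (hρ1 : ρ < 1)
    (p : S → ℝ) (hp : ∀ s, 0 ≤ p s) (hpsum : ∑ s, p s = 1)
    (q : S → A → ℝ) (hq : ∀ s a, 0 ≤ q s a) (hqsum : ∀ s, ∑ a, q s a = 1)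
    (f : S → A)
    (r : S → A → Y → ℝ) (hr : ∀ s a y, 0 ≤ r s a y)
    (hrsum : ∀ s a, ∑ y, r s a y = 1)
    (J : S → A → Bool → Y → ℝ)
    (hJ : ∀ s a₀ π y, J s a₀ π y =
      p s * q s a₀ * (if π then ρ else 1 - ρ) * r s (if π then f s else a₀) y)
    (hM : 0 < ∑ s, p s * q s (f s)) :
    ∀ (s : S) (y : Y),
      J s (f s) false y / (∑ s', ∑ y', J s' (f s') false y') =
        ((∑ π : Bool, ∑ y', J s (f s) π y') /
          (∑ s', ∑ π : Bool, ∑ y', J s' (f s') π y')) * r s (f s) y := by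
  intro s y
  have hy : ∀ s' (b : Bool), ∑ y', J s' (f s') b y' =
      p s' * q s' (f s') * (if b then ρ else 1 - ρ) := by
    intro s' b
    simp only [hJ]
    rw [← Finset.mul_sum]
    cases b <;> simp [hrsum]
  have hD0 : (∑ s', ∑ y', J s' (f s') false y') =
      (1 - ρ) * ∑ s', p s' * q s' (f s') := by
    simp only [hy]; rw [Finset.mul_sum]; apply Finset.sum_congr rfl; intros; simp; ring
  have hb : ∀ s', ∑ π : Bool, ∑ y', J s' (f s') π y' = p s' * q s' (f s') := by
    intro s'
    rw [Fintype.sum_bool, hy, hy]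
    simp; ring
  have hDt : (∑ s', ∑ π : Bool, ∑ y', J s' (f s') π y') =
      ∑ s', p s' * q s' (f s') := Finset.sum_congr rfl (fun s' _ => hb s')
  have hM' : (∑ s', p s' * q s' (f s')) ≠ 0 := ne_of_gt hM
  have h1ρ : (1 : ℝ) - ρ ≠ 0 := by linarith
  rw [hD0, hb, hDt, hJ]
  simp only [Bool.false_eq_true, if_false]
  field_simp
end

section
/- In the discrete two-stage model, assume that for every state s with p s > 0 one has q s (f s) > 0, and that Pr(M=1) = ∑ s, p s · q s (f s) > 0. Then for every function g : Y → ℝ: ∑ y, g y · Pr(Y=y | Π=1) = ∑ s y, (Pr(S₂=s) / Pr(S₂=s | M=1)) · g y · Pr(Y=y, S₂=s | Π=0, M=1) (convention 0/0 = 0 for states with p s = 0). That is, every expectation of a function of the outcome under the estimated optimal policy equals the corresponding inverse-probability-weighted expectation over matched trajectories. -/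
/-- Under the positivity conditions of Lemma 1, every expectation of a function
`g` of the outcome under the estimated optimal policy equals the corresponding
inverse-probability-weighted expectation over matched trajectories:
`∑ y, g y · Pr(Y=y | Π=1) =
  ∑ s y, (Pr(S₂=s) / Pr(S₂=s | M=1)) · g y · Pr(Y=y, S₂=s | Π=0, M=1)`
(with the Lean convention `x / 0 = 0` handling states with `p s = 0`). -/
theorem stmt7 {S A Y : Type*} [Fintype S] [Fintype A] [Fintype Y]
    [Nonempty S] [Nonempty A] [Nonempty Y]
    (ρ : ℝ) (hρ0 : 0 < ρ) (hρ1 : ρ < 1)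
    (p : S → ℝ) (hp : ∀ s, 0 ≤ p s) (hpsum : ∑ s, p s = 1)
    (q : S → A → ℝ) (hq : ∀ s a, 0 ≤ q s a) (hqsum : ∀ s, ∑ a, q s a = 1)
    (f : S → A)
    (r : S → A → Y → ℝ) (hr : ∀ s a y, 0 ≤ r s a y)
    (hrsum : ∀ s a, ∑ y, r s a y = 1)
    (J : S → A → Bool → Y → ℝ)
    (hJ : ∀ s a₀ π y, J s a₀ π y =
      p s * q s a₀ * (if π then ρ else 1 - ρ) * r s (if π then f s else a₀) y)
    (hpos : ∀ s, 0 < p s → 0 < q s (f s))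
    (hM : 0 < ∑ s, p s * q s (f s)) :
    ∀ g : Y → ℝ,
      ∑ y, g y * ((∑ s, ∑ a₀, J s a₀ true y) / ρ) =
        ∑ s, ∑ y,
          (p s /
            ((∑ π : Bool, ∑ y', J s (f s) π y') /
              (∑ s', ∑ π : Bool, ∑ y', J s' (f s') π y'))) *
          g y * (J s (f s) false y / (∑ s', ∑ y', J s' (f s') false y')) := by
  intro g
  have h1ρ : (0:ℝ) < 1 - ρ := by linarith
  set M : ℝ := ∑ s, p s * q s (f s) with hMdef
  have hsum : ∀ (s : S) (a : A) (c : ℝ),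
      ∑ y', p s * q s a * c * r s a y' = p s * q s a * c := by
    intro s a c
    rw [← Finset.mul_sum, hrsum, mul_one]
  have hD1 : ∀ s, (∑ π : Bool, ∑ y', J s (f s) π y') = p s * q s (f s) := by
    intro s
    rw [Fintype.sum_bool]
    simp only [hJ, if_true, if_false, Bool.false_eq_true]
    rw [hsum, hsum]; ring
  have hD2 : (∑ s', ∑ π : Bool, ∑ y', J s' (f s') π y') = M := by
    exact Finset.sum_congr rfl fun s _ => hD1 s
  have hD3 : (∑ s', ∑ y', J s' (f s') false y') = (1 - ρ) * M := by
    rw [hMdef, Finset.mul_sum]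
    refine Finset.sum_congr rfl fun s _ => ?_
    simp only [hJ, if_false, Bool.false_eq_true]
    rw [hsum]; ring
  have hX : ∀ y, (∑ s, ∑ a₀, J s a₀ true y) = ρ * ∑ s, p s * r s (f s) y := by
    intro y
    rw [Finset.mul_sum]
    refine Finset.sum_congr rfl fun s _ => ?_
    simp only [hJ, if_true]
    have : ∑ a₀, p s * q s a₀ * ρ * r s (f s) y
        = (∑ a₀, q s a₀) * (p s * ρ * r s (f s) y) := by
      rw [Finset.sum_mul]
      exact Finset.sum_congr rfl fun a _ => by ring
    rw [this, hqsum]; ring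
  have hL : ∑ y, g y * ((∑ s, ∑ a₀, J s a₀ true y) / ρ)
      = ∑ s, ∑ y, p s * r s (f s) y * g y := by
    rw [Finset.sum_comm]
    refine Finset.sum_congr rfl fun y _ => ?_
    rw [hX y, mul_div_cancel_left₀ _ (ne_of_gt hρ0), Finset.mul_sum]
    exact Finset.sum_congr rfl fun s _ => by ring
  rw [hL]
  refine Finset.sum_congr rfl fun s _ => ?_
  rw [hD2, hD3, hD1]
  refine Finset.sum_congr rfl fun y _ => ?_
  rcases eq_or_lt_of_le (hp s) with hps | hps
  · simp only [hJ, ← hps, if_false, Bool.false_eq_true]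
    ring
  · have hqs : 0 < q s (f s) := hpos s hps
    simp only [hJ, if_false, Bool.false_eq_true]
    field_simp
end
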